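/- arXiv:math/0508442 — 2 statements merged into one kernel-verified Lean document; each statement's English description precedes it below -/
import Mathlib

section
/- Let h : [0,∞) → ℝ be a nonnegative locally integrable function. Suppose there exist nonnegative constants a₁, a₂ such that ∫_{t₀}^{t} h(τ) dτ ≤ a₁ (t − t₀) + a₂ for all t, t₀ with 0 ≤ t₀ ≤ t. Then sup_{t ≥ 0} ( e^{−t} ∫_{0}^{t} e^{τ} h(τ) dτ ) < ∞. -/
open MeasureTheory Real

/-! Split `[0, t]` into the last unit interval `[t - 1, t]` and `[0, t - 1]`. On the unit
interval `e^τ ≤ e^t` and `∫ h ≤ M := a₁ + a₂`, so `F(t) := ∫₀ᵗ e^τ h ≤ F(t - 1) + M e^t`.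
Induction on `⌈t⌉` then gives `F(t) ≤ 2 M e^t`, because `2 e^{-1} ≤ 1`. -/

theorem two_mul_exp_neg_one_le_one : 2 * exp (-1) ≤ 1 := by
  rw [exp_neg, ← div_eq_mul_inv, div_le_one (exp_pos 1)]
  linarith [exp_one_gt_d9]

theorem integral_exp_mul_le_exp_mul_integral {h : ℝ → ℝ} {s t : ℝ} (hst : s ≤ t)
    (hnonneg : ∀ τ ∈ Set.Icc s t, 0 ≤ h τ) (hint : IntervalIntegrable h volume s t) :
    ∫ τ in s..t, exp τ * h τ ≤ exp t * ∫ τ in s..t, h τ := by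
  rw [← intervalIntegral.integral_const_mul]
  exact intervalIntegral.integral_mono_on hst
    (hint.continuousOn_mul continuous_exp.continuousOn) (hint.const_mul _)
    fun τ hτ => mul_le_mul_of_nonneg_right (exp_le_exp.2 hτ.2) (hnonneg τ hτ)

theorem integral_exp_mul_le_of_integral_unit_window_le {h : ℝ → ℝ} {M : ℝ}
    (hnonneg : ∀ t, 0 ≤ t → 0 ≤ h t)
    (hint : ∀ s t : ℝ, 0 ≤ s → s ≤ t → IntervalIntegrable h volume s t)
    (hwindow : ∀ s t : ℝ, 0 ≤ s → s ≤ t → t ≤ s + 1 → ∫ τ in s..t, h τ ≤ M)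
    {t : ℝ} (ht : 0 ≤ t) :
    ∫ τ in (0 : ℝ)..t, exp τ * h τ ≤ 2 * M * exp t := by
  have hM : 0 ≤ M := by simpa using hwindow 0 0 le_rfl le_rfl (by norm_num)
  have hint_exp : ∀ s t : ℝ, 0 ≤ s → s ≤ t →
      IntervalIntegrable (fun τ => exp τ * h τ) volume s t := fun s t hs hst =>
    (hint s t hs hst).continuousOn_mul continuous_exp.continuousOn
  have hwindow_exp : ∀ s t : ℝ, 0 ≤ s → s ≤ t → t ≤ s + 1 →
      ∫ τ in s..t, exp τ * h τ ≤ M * exp t := fun s t hs hst hts =>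
    calc ∫ τ in s..t, exp τ * h τ ≤ exp t * ∫ τ in s..t, h τ :=
          integral_exp_mul_le_exp_mul_integral hst
            (fun τ hτ => hnonneg τ (hs.trans hτ.1)) (hint s t hs hst)
      _ ≤ exp t * M := mul_le_mul_of_nonneg_left (hwindow s t hs hst hts) (exp_pos t).le
      _ = M * exp t := mul_comm _ _
  suffices key : ∀ n : ℕ, ∀ t : ℝ, 0 ≤ t → t ≤ n →
      ∫ τ in (0 : ℝ)..t, exp τ * h τ ≤ 2 * M * exp t from key _ t ht (Nat.le_ceil t)
  intro n
  induction n with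
  | zero =>
    intro t ht htn
    obtain rfl : t = 0 := le_antisymm (mod_cast htn) ht
    simpa using hM
  | succ n ih =>
    intro t ht htn
    rcases le_or_gt t 1 with ht1 | ht1
    · have := hwindow_exp 0 t le_rfl ht (by linarith)
      nlinarith [exp_pos t]
    have hs : 0 ≤ t - 1 := by linarith
    have hsn : t - 1 ≤ n := by push_cast at htn; linarith
    have hexp : exp (t - 1) = exp t * exp (-1) := by rw [← exp_add, sub_eq_add_neg]
    calc ∫ τ in (0 : ℝ)..t, exp τ * h τ
        = (∫ τ in (0 : ℝ)..t - 1, exp τ * h τ) + ∫ τ in t - 1..t, exp τ * h τ :=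
          (intervalIntegral.integral_add_adjacent_intervals
            (hint_exp 0 (t - 1) le_rfl hs) (hint_exp (t - 1) t hs (by linarith))).symm
      _ ≤ 2 * M * exp (t - 1) + M * exp t :=
          add_le_add (ih _ hs hsn) (hwindow_exp _ t hs (by linarith) (by linarith))
      _ = M * exp t * (2 * exp (-1)) + M * exp t := by rw [hexp]; ring
      _ ≤ 2 * M * exp t := by
          nlinarith [mul_le_mul_of_nonneg_left two_mul_exp_neg_one_le_one
            (mul_nonneg hM (exp_pos t).le)]

theorem stmt0_general (h : ℝ → ℝ) (a₁ a₂ : ℝ)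
    (hnonneg : ∀ t, 0 ≤ t → 0 ≤ h t)
    (hint : ∀ t₀ t : ℝ, 0 ≤ t₀ → t₀ ≤ t → IntervalIntegrable h volume t₀ t)
    (ha₁ : 0 ≤ a₁)
    (hbound : ∀ t₀ t : ℝ, 0 ≤ t₀ → t₀ ≤ t →
      (∫ τ in t₀..t, h τ) ≤ a₁ * (t - t₀) + a₂) :
    ∃ C : ℝ, ∀ t : ℝ, 0 ≤ t →
      Real.exp (-t) * ∫ τ in (0 : ℝ)..t, Real.exp τ * h τ ≤ C := by
  have hwindow : ∀ s t : ℝ, 0 ≤ s → s ≤ t → t ≤ s + 1 → ∫ τ in s..t, h τ ≤ a₁ + a₂ :=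
    fun s t hs hst hts => (hbound s t hs hst).trans (by nlinarith)
  refine ⟨2 * (a₁ + a₂), fun t ht => ?_⟩
  calc exp (-t) * ∫ τ in (0 : ℝ)..t, exp τ * h τ
      ≤ exp (-t) * (2 * (a₁ + a₂) * exp t) := mul_le_mul_of_nonneg_left
        (integral_exp_mul_le_of_integral_unit_window_le hnonneg hint hwindow ht) (exp_pos _).le
    _ = 2 * (a₁ + a₂) := by rw [mul_comm, mul_assoc, ← exp_add, add_neg_cancel, exp_zero, mul_one]

/-- Let `h : [0,∞) → ℝ` be a nonnegative locally integrable function. Suppose there exist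
nonnegative constants `a₁, a₂` such that `∫_{t₀}^{t} h ≤ a₁ (t − t₀) + a₂` for all
`0 ≤ t₀ ≤ t`. Then `sup_{t ≥ 0} ( e^{−t} ∫_{0}^{t} e^{τ} h(τ) dτ ) < ∞`. -/
theorem stmt0 (h : ℝ → ℝ) (a₁ a₂ : ℝ)
    (hnonneg : ∀ t, 0 ≤ t → 0 ≤ h t)
    (hint : ∀ t₀ t : ℝ, 0 ≤ t₀ → t₀ ≤ t → IntervalIntegrable h volume t₀ t)
    (ha₁ : 0 ≤ a₁) (ha₂ : 0 ≤ a₂)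
    (hbound : ∀ t₀ t : ℝ, 0 ≤ t₀ → t₀ ≤ t →
      (∫ τ in t₀..t, h τ) ≤ a₁ * (t - t₀) + a₂) :
    ∃ C : ℝ, ∀ t : ℝ, 0 ≤ t →
      Real.exp (-t) * ∫ τ in (0 : ℝ)..t, Real.exp τ * h τ ≤ C :=
  stmt0_general h a₁ a₂ hnonneg hint ha₁ hbound
end

section
/- Let h : [0,∞) → ℝ be a nonnegative locally integrable function, a ≥ 0 a constant, n ∈ ℕ with n ≥ 1, and r ∈ [0,1). Suppose that ∫_{j−1}^{j} h(τ) dτ ≤ a for every integer j with 1 ≤ j ≤ n+1. Then, with t = n + r, one has e^{−t} ∫_{0}^{t} e^{τ} h(τ) dτ ≤ a · e² / (e − 1). -/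
open MeasureTheory Real

/-- Let `h : [0,∞) → ℝ` be a nonnegative locally integrable function, `a ≥ 0`, `n ≥ 1`,
`r ∈ [0,1)`. Suppose `∫_{j−1}^{j} h ≤ a` for every integer `1 ≤ j ≤ n+1`. Then, with
`t = n + r`, one has `e^{−t} ∫_{0}^{t} e^{τ} h(τ) dτ ≤ a e² / (e − 1)`. -/
theorem stmt2 (h : ℝ → ℝ) (a : ℝ) (n : ℕ) (r : ℝ)
    (hnonneg : ∀ t, 0 ≤ t → 0 ≤ h t)
    (hint : ∀ t₀ t : ℝ, 0 ≤ t₀ → t₀ ≤ t → IntervalIntegrable h volume t₀ t)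
    (ha : 0 ≤ a) (hn : 1 ≤ n) (hr0 : 0 ≤ r) (hr1 : r < 1)
    (hpieces : ∀ j : ℕ, 1 ≤ j → j ≤ n + 1 →
      (∫ τ in ((j : ℝ) - 1)..(j : ℝ), h τ) ≤ a) :
    Real.exp (-((n : ℝ) + r)) * ∫ τ in (0 : ℝ)..((n : ℝ) + r), Real.exp τ * h τ ≤
      a * Real.exp 2 / (Real.exp 1 - 1) := by
  set t : ℝ := (n : ℝ) + r with htdef
  have hn1 : (1:ℝ) ≤ (n:ℝ) := by exact_mod_cast hn
  have htn : (n:ℝ) ≤ t := by simp [htdef, hr0]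
  have htn1 : t ≤ (n:ℝ) + 1 := by simp [htdef]; linarith
  have he1 : (1:ℝ) < Real.exp 1 := by
    have := Real.add_one_le_exp (1:ℝ); linarith
  have he1pos : (0:ℝ) < Real.exp 1 - 1 := by linarith
  have hintE : ∀ c d : ℝ, 0 ≤ c → c ≤ d →
      IntervalIntegrable (fun τ => Real.exp τ * h τ) volume c d := by
    intro c d h0 h01
    exact (hint c d h0 h01).continuousOn_mul Real.continuous_exp.continuousOn
  -- piece bound
  have key : ∀ c d : ℝ, 0 ≤ c → c ≤ d → (∫ τ in c..d, h τ) ≤ a →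
      (∫ τ in c..d, Real.exp τ * h τ) ≤ Real.exp d * a := by
    intro c d hc hcd hb
    have h1 : (∫ τ in c..d, Real.exp τ * h τ) ≤ ∫ τ in c..d, Real.exp d * h τ := by
      apply intervalIntegral.integral_mono_on hcd (hintE c d hc hcd)
        ((hint c d hc hcd).const_mul _)
      intro x hx
      exact mul_le_mul_of_nonneg_right (Real.exp_le_exp.2 hx.2)
        (hnonneg x (le_trans hc hx.1))
    rw [intervalIntegral.integral_const_mul] at h1
    exact h1.trans (mul_le_mul_of_nonneg_left hb (Real.exp_pos d).le)
  -- split the integral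
  have hsum : (∑ k ∈ Finset.range n, ∫ τ in ((k:ℕ):ℝ)..((k+1:ℕ):ℝ), Real.exp τ * h τ)
      = ∫ τ in ((0:ℕ):ℝ)..((n:ℕ):ℝ), Real.exp τ * h τ :=
    intervalIntegral.sum_integral_adjacent_intervals (fun k _ =>
      hintE (k:ℝ) ((k+1:ℕ):ℝ) (Nat.cast_nonneg k) (by push_cast; linarith))
  have hsplit : (∫ τ in (0:ℝ)..t, Real.exp τ * h τ)
      = (∑ k ∈ Finset.range n, ∫ τ in ((k:ℕ):ℝ)..((k+1:ℕ):ℝ), Real.exp τ * h τ)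
        + ∫ τ in ((n:ℕ):ℝ)..t, Real.exp τ * h τ := by
    rw [hsum]
    norm_num
    exact (intervalIntegral.integral_add_adjacent_intervals
      (hintE 0 (n:ℝ) le_rfl (by positivity))
      (hintE (n:ℝ) t (by positivity) htn)).symm
  -- bound each unit piece
  have hpiece : ∀ k ∈ Finset.range n,
      (∫ τ in ((k:ℕ):ℝ)..((k+1:ℕ):ℝ), Real.exp τ * h τ) ≤ Real.exp ((k:ℝ)+1) * a := by
    intro k hk
    have hk' : k < n := Finset.mem_range.1 hk
    have hb : (∫ τ in ((k:ℝ))..((k:ℝ)+1), h τ) ≤ a := by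
      have := hpieces (k+1) (by omega) (by omega)
      push_cast at this
      convert this using 2 <;> ring
    have := key (k:ℝ) ((k:ℝ)+1) (Nat.cast_nonneg k) (by linarith) hb
    push_cast
    exact this
  -- bound the last piece
  have hlast : (∫ τ in ((n:ℕ):ℝ)..t, Real.exp τ * h τ) ≤ Real.exp ((n:ℝ)+1) * a := by
    have hb1 : (∫ τ in ((n:ℝ))..t, h τ) ≤ ∫ τ in ((n:ℝ))..((n:ℝ)+1), h τ := by
      apply intervalIntegral.integral_mono_interval (le_refl (n:ℝ)) htn htn1
      · filter_upwards [ae_restrict_mem measurableSet_Ioc] with x hx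
        exact hnonneg x (le_trans (Nat.cast_nonneg n) hx.1.le)
      · exact hint (n:ℝ) ((n:ℝ)+1) (by positivity) (by linarith)
    have hb2 : (∫ τ in ((n:ℝ))..((n:ℝ)+1), h τ) ≤ a := by
      have := hpieces (n+1) (by omega) (by omega)
      push_cast at this
      convert this using 2 <;> ring
    have := key (n:ℝ) t (by positivity) htn (hb1.trans hb2)
    push_cast
    exact this.trans (mul_le_mul_of_nonneg_right (Real.exp_le_exp.2 htn1) ha)
  -- total bound
  have hexpk : ∀ k : ℕ, Real.exp ((k:ℝ)+1) = Real.exp 1 ^ (k+1) := by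
    intro k
    rw [← Real.exp_nat_mul]
    push_cast; ring_nf
  have hS : (∫ τ in (0:ℝ)..t, Real.exp τ * h τ)
      ≤ (∑ k ∈ Finset.range (n+1), Real.exp 1 ^ (k+1)) * a := by
    rw [hsplit, Finset.sum_mul]
    rw [Finset.sum_range_succ]
    apply add_le_add
    · apply Finset.sum_le_sum
      intro k hk
      exact (hpiece k hk).trans (by rw [hexpk k])
    · exact hlast.trans (by rw [hexpk n])
  have hgeom : (∑ k ∈ Finset.range (n+1), Real.exp 1 ^ (k+1))
      ≤ Real.exp 1 ^ (n+2) / (Real.exp 1 - 1) := by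
    have : (∑ k ∈ Finset.range (n+1), Real.exp 1 ^ (k+1))
        = Real.exp 1 * ((Real.exp 1 ^ (n+1) - 1) / (Real.exp 1 - 1)) := by
      rw [← geom_sum_eq (by linarith : Real.exp 1 ≠ 1) (n+1), Finset.mul_sum]
      congr 1; ext k; ring
    rw [this, mul_div_assoc']
    gcongr
    have h2 : (0:ℝ) < Real.exp 1 := Real.exp_pos 1
    nlinarith [pow_pos h2 (n+1), pow_succ (Real.exp 1) (n+1)]
  have hB : (∫ τ in (0:ℝ)..t, Real.exp τ * h τ)
      ≤ Real.exp 1 ^ (n+2) / (Real.exp 1 - 1) * a :=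
    hS.trans (mul_le_mul_of_nonneg_right hgeom ha)
  calc Real.exp (-t) * ∫ τ in (0:ℝ)..t, Real.exp τ * h τ
      ≤ Real.exp (-t) * (Real.exp 1 ^ (n+2) / (Real.exp 1 - 1) * a) :=
        mul_le_mul_of_nonneg_left hB (Real.exp_pos _).le
    _ ≤ Real.exp (-(n:ℝ)) * (Real.exp 1 ^ (n+2) / (Real.exp 1 - 1) * a) := by
        apply mul_le_mul_of_nonneg_right (Real.exp_le_exp.2 (by linarith))
        positivity
    _ = a * Real.exp 2 / (Real.exp 1 - 1) := by
        have : Real.exp 1 ^ (n+2) = Real.exp ((n:ℝ)+2) := by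
          rw [← Real.exp_nat_mul]; push_cast; ring_nf
        have h2 : Real.exp (-(n:ℝ)) * Real.exp ((n:ℝ)+2) = Real.exp 2 := by
          rw [← Real.exp_add]; norm_num
        rw [this]
        field_simp
        linear_combination a * h2
end
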